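/- arXiv:1701.06752 — 3 statements merged into one kernel-verified Lean document; each statement's English description precedes it below -/
import Mathlib

section
/- Let Z_W(m) = 2^m · m^{-m(m+1)/2} · ∏_{j=1}^m j!. Then for a fixed positive integer k, lim_{m→∞} (1/m) · log[ ((m-k)/m)^{m(m+1)/2} · Z_W(m-k)/Z_W(m) ] = k. -/
/-! Writing `m = n + k`, the powers of `m` cancel and the logarithm of the ratio becomes
`(k n + k(k+1)/2) log n - k log 2 - ∑_{i<k} log (n+i+1)!`. Stirling's formula gives
`log (n+i+1)! = n log n - n + o(n)`, so the logarithm is `k n + o(n)`. -/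

open Real Filter Finset

/-- The normalizing constant `Z_W(m) = 2^m · m^{-m(m+1)/2} · ∏_{j=1}^m j!` of the
Wishart eigenvalue density. -/
noncomputable def wishartZ (m : ℕ) : ℝ :=
  2 ^ m * (m : ℝ) ^ (-((m * (m + 1) : ℝ) / 2)) * ∏ j ∈ Finset.Icc 1 m, (Nat.factorial j : ℝ)

open Asymptotics
open scoped Nat

theorem Finset.sum_Icc_one_add {M : Type*} [AddCommMonoid M] (f : ℕ → M) (n k : ℕ) :
    ∑ j ∈ Icc 1 (n + k), f j = ∑ j ∈ Icc 1 n, f j + ∑ i ∈ range k, f (n + (i + 1)) := by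
  induction k with
  | zero => simp
  | succ k ih =>
    rw [← add_assoc, sum_Icc_succ_top (by omega), ih, sum_range_succ, add_assoc, add_assoc]

theorem tendsto_div_natCast_of_isLittleO {f : ℕ → ℝ} {c : ℝ}
    (h : (fun n => f n - c * n) =o[atTop] (fun n => (n : ℝ))) :
    Tendsto (fun n => f n / n) atTop (nhds c) := by
  rw [← zero_add c]
  refine (h.tendsto_div_nhds_zero.add_const c).congr' ?_
  filter_upwards [eventually_ne_atTop 0] with n hn
  field_simp
  ring

theorem isLittleO_const_natCast (c : ℝ) : (fun _ : ℕ => c) =o[atTop] (fun n => (n : ℝ)) :=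
  isLittleO_const_left.2 <| .inr <| tendsto_norm_atTop_atTop.comp tendsto_natCast_atTop_atTop

theorem isLittleO_log_natCast : (fun n : ℕ => log n) =o[atTop] (fun n => (n : ℝ)) :=
  isLittleO_log_id_atTop.comp_tendsto tendsto_natCast_atTop_atTop

theorem isLittleO_log_two_mul_natCast :
    (fun n : ℕ => log (2 * n)) =o[atTop] (fun n => (n : ℝ)) :=
  ((isLittleO_const_natCast (log 2)).add isLittleO_log_natCast).congr'
    (by filter_upwards [eventually_ne_atTop 0] with n hn; rw [log_mul two_ne_zero (by positivity)])
    .rfl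

theorem Stirling.isLittleO_log_factorial_sub :
    (fun n : ℕ => log (n ! : ℝ) - (n * log n - n)) =o[atTop] (fun n => (n : ℝ)) := by
  have hseq : (fun n => log (stirlingSeq n)) =o[atTop] (fun n => (n : ℝ)) :=
    ((continuousAt_log (by positivity)).tendsto.comp tendsto_stirlingSeq_sqrt_pi).isBigO_one ℝ
      |>.trans_isLittleO (isLittleO_const_natCast 1)
  refine (hseq.add (isLittleO_log_two_mul_natCast.const_mul_left (1 / 2))).congr' ?_ .rfl
  filter_upwards [eventually_ne_atTop 0] with n hn
  rw [log_stirlingSeq_formula, log_div (by positivity) (exp_ne_zero 1), log_exp]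
  ring

theorem isLittleO_log_factorial_add_sub (j : ℕ) :
    (fun n : ℕ => log ((n + j)! : ℝ) - log (n ! : ℝ)) =o[atTop] (fun n => (n : ℝ)) := by
  refine (IsBigO.of_bound 1 ?_).trans_isLittleO (isLittleO_log_two_mul_natCast.const_mul_left j)
  filter_upwards [eventually_ge_atTop (max j 1)] with n hn
  have hasc : 1 ≤ (n + 1).ascFactorial j := Nat.ascFactorial_pos _ _
  rw [← Nat.factorial_mul_ascFactorial, Nat.cast_mul,
    log_mul (by positivity) (by positivity), add_sub_cancel_left, one_mul]
  calc ‖log ((n + 1).ascFactorial j : ℝ)‖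
      = log ((n + 1).ascFactorial j : ℝ) := norm_of_nonneg (log_nonneg (by exact_mod_cast hasc))
    _ ≤ log (((n + j) ^ j : ℕ) : ℝ) :=
      log_le_log (by positivity) (by exact_mod_cast Nat.ascFactorial_le_pow_add n j)
    _ = j * log (n + j) := by push_cast; rw [log_pow]
    _ ≤ j * log (2 * n) := by
      have hj : (j : ℝ) ≤ n := by exact_mod_cast le_of_max_le_left hn
      have hn1 : (1 : ℝ) ≤ n := by exact_mod_cast le_of_max_le_right hn
      gcongr
      linarith
    _ ≤ ‖j * log (2 * n)‖ := le_norm_self _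

theorem isLittleO_log_factorial_add (j : ℕ) :
    (fun n : ℕ => log ((n + j)! : ℝ) - (n * log n - n)) =o[atTop] (fun n => (n : ℝ)) :=
  ((isLittleO_log_factorial_add_sub j).add Stirling.isLittleO_log_factorial_sub).congr_left
    fun n => by ring

theorem log_wishartZ {m : ℕ} (hm : m ≠ 0) :
    log (wishartZ m) = m * log 2 - (m * (m + 1) / 2) * log m + ∑ j ∈ Icc 1 m, log (j ! : ℝ) := by
  have hpow : (m : ℝ) ^ (-((m * (m + 1) : ℝ) / 2)) ≠ 0 := by positivity
  rw [wishartZ, log_mul (by positivity) (by positivity), log_mul (by positivity) hpow, log_pow,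
    log_rpow (by positivity), log_prod fun j _ => by positivity]
  ring

theorem log_wishartZ_ratio {n : ℕ} (hn : n ≠ 0) (k : ℕ) :
    log (((n : ℝ) / (n + k)) ^ (((n + k) * (n + k + 1) : ℝ) / 2) * wishartZ n / wishartZ (n + k)) =
      (k * n + k * (k + 1) / 2) * log n - k * log 2 - ∑ i ∈ range k, log ((n + (i + 1))! : ℝ) := by
  have hZ : ∀ m ≠ 0, wishartZ m ≠ 0 := fun m hm => by unfold wishartZ; positivity
  have hnk : n + k ≠ 0 := by omega
  rw [log_div (mul_ne_zero (by positivity) (hZ n hn)) (hZ _ hnk), log_mul (by positivity) (hZ n hn),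
    log_rpow (by positivity), log_div (by positivity) (by positivity), log_wishartZ hn,
    log_wishartZ hnk, sum_Icc_one_add]
  push_cast
  ring

theorem wishartZ_ratio_growth_general (k : ℕ) :
    Filter.Tendsto
      (fun m : ℕ =>
        (1 / (m : ℝ)) * Real.log
          ((((m : ℝ) - k) / m) ^ ((m * (m + 1) : ℝ) / 2) * wishartZ (m - k) / wishartZ m))
      Filter.atTop (nhds (k : ℝ)) := by
  rw [← tendsto_add_atTop_iff_nat k]
  have hE : (fun n : ℕ => (k * n + k * (k + 1) / 2) * log n - k * log 2
      - ∑ i ∈ range k, log ((n + (i + 1))! : ℝ) - k * n) =o[atTop] (fun n => (n : ℝ)) := by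
    have hsum := IsLittleO.fun_sum fun i (_ : i ∈ range k) => isLittleO_log_factorial_add (i + 1)
    refine ((isLittleO_log_natCast.const_mul_left (k * (k + 1) / 2)).sub
      (isLittleO_const_natCast (k * log 2))).sub hsum |>.congr_left fun n => ?_
    simp only [sum_sub_distrib, sum_const, card_range, nsmul_eq_mul]
    ring
  have hlim := (tendsto_div_natCast_of_isLittleO hE).mul (tendsto_natCast_div_add_atTop (k : ℝ))
  rw [mul_one] at hlim
  refine hlim.congr' ?_
  filter_upwards [eventually_ne_atTop 0] with n hn
  push_cast [Nat.add_sub_cancel, add_sub_cancel_right]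
  rw [log_wishartZ_ratio hn]
  field_simp

/-- For a fixed positive integer `k`,
`lim_{m→∞} (1/m) log[ ((m-k)/m)^{m(m+1)/2} · Z_W(m-k)/Z_W(m) ] = k`. -/
theorem wishartZ_ratio_growth (k : ℕ) (hk : 0 < k) :
    Filter.Tendsto
      (fun m : ℕ =>
        (1 / (m : ℝ)) * Real.log
          ((((m : ℝ) - k) / m) ^ ((m * (m + 1) : ℝ) / 2) * wishartZ (m - k) / wishartZ m))
      Filter.atTop (nhds (k : ℝ)) :=
  wishartZ_ratio_growth_general k
end

section
/- For x ≥ 4, the function φ(μ_MP, z) = ∫₀⁴ log|z - y| dμ_MP(y) - z/2 satisfies φ(μ_MP, x) = -I_MP(x) - 1, where μ_MP is the Marchenko-Pastur distribution with density √((4-y)y)/(2πy) on [0,4] and I_MP(x) = ∫₄ˣ √((t-4)/(4t)) dt. -/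
/-!
Write `log (x - y) = log (4 - y) + ∫₄ˣ dt / (t - y)`. The substitution `y = 2 + 2 cos θ` turns
`μ_MP` into `(1 - cos θ) dθ / π` on `[0, π]`; hence `∫ log (4 - y) dμ_MP = 1` follows from
`∫₀^π log (2 - 2 cos θ) dθ = 0` (the classical `∫ log sin`) and
`∫₀^π cos θ log (2 - 2 cos θ) dθ = -π`. By Fubini the second term integrates to `∫₄ˣ G`, where
the Stieltjes transform `G t = ∫ dμ_MP(y) / (t - y) = 1/2 - √((t - 4) / (4t))` has an explicit
arcsine primitive in `y`.
-/

open Real Set MeasureTheory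

namespace MarchenkoPastur

section ChebyshevSubstitution

variable {c r : ℝ}

theorem image_add_mul_cos_Ioo (hr : 0 < r) :
    (fun θ => c + r * cos θ) '' Ioo 0 π = Ioo (c - r) (c + r) := by
  ext y
  constructor
  · rintro ⟨θ, ⟨h0, hπ⟩, rfl⟩
    have h1 : cos θ < 1 := by
      simpa using strictAntiOn_cos ⟨le_rfl, pi_pos.le⟩ ⟨h0.le, hπ.le⟩ h0
    have h2 : -1 < cos θ := by
      simpa using strictAntiOn_cos ⟨h0.le, hπ.le⟩ ⟨pi_pos.le, le_rfl⟩ hπ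
    constructor <;> nlinarith
  · rintro ⟨h1, h2⟩
    have hlo : -1 < (y - c) / r := by rw [lt_div_iff₀ hr]; linarith
    have hhi : (y - c) / r < 1 := by rw [div_lt_iff₀ hr]; linarith
    refine ⟨arccos ((y - c) / r), ⟨arccos_pos.2 hhi, arccos_lt_pi.2 hlo⟩, ?_⟩
    dsimp only
    rw [cos_arccos hlo.le hhi.le]
    field_simp
    ring

theorem injOn_add_mul_cos (hr : 0 < r) : InjOn (fun θ => c + r * cos θ) (Ioo 0 π) := by
  intro a ha b hb hab
  exact injOn_cos (Ioo_subset_Icc_self ha) (Ioo_subset_Icc_self hb)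
    (mul_left_cancel₀ hr.ne' (add_left_cancel hab))

theorem hasDerivWithinAt_add_mul_cos (θ : ℝ) (s : Set ℝ) :
    HasDerivWithinAt (fun θ => c + r * cos θ) (-(r * sin θ)) s θ := by
  simpa using ((hasDerivAt_cos θ).const_mul r).const_add c |>.hasDerivWithinAt

theorem abs_neg_mul_sin_of_mem_Ioo {θ : ℝ} (hr : 0 < r) (hθ : θ ∈ Ioo 0 π) :
    |-(r * sin θ)| = r * sin θ := by
  rw [abs_neg, abs_of_pos (mul_pos hr (sin_pos_of_pos_of_lt_pi hθ.1 hθ.2))]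

theorem integrableOn_Ioo_iff_integrableOn_sin_mul_comp_cos (hr : 0 < r) (g : ℝ → ℝ) :
    IntegrableOn g (Ioo (c - r) (c + r)) ↔
      IntegrableOn (fun θ => r * sin θ * g (c + r * cos θ)) (Ioo 0 π) := by
  rw [← image_add_mul_cos_Ioo hr, integrableOn_image_iff_integrableOn_abs_deriv_smul
    measurableSet_Ioo (fun θ _ => hasDerivWithinAt_add_mul_cos θ _) (injOn_add_mul_cos hr)]
  refine integrableOn_congr_fun (fun θ hθ => ?_) measurableSet_Ioo
  rw [abs_neg_mul_sin_of_mem_Ioo hr hθ, smul_eq_mul]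

theorem integral_Ioo_eq_integral_sin_mul_comp_cos (hr : 0 < r) (g : ℝ → ℝ) :
    ∫ y in Ioo (c - r) (c + r), g y = ∫ θ in Ioo 0 π, r * sin θ * g (c + r * cos θ) := by
  rw [← image_add_mul_cos_Ioo hr, integral_image_eq_integral_abs_deriv_smul
    measurableSet_Ioo (fun θ _ => hasDerivWithinAt_add_mul_cos θ _) (injOn_add_mul_cos hr)]
  refine setIntegral_congr_fun measurableSet_Ioo (fun θ hθ => ?_)
  rw [abs_neg_mul_sin_of_mem_Ioo hr hθ, smul_eq_mul]

end ChebyshevSubstitution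

theorem two_sub_two_mul_cos (θ : ℝ) : 2 - 2 * cos θ = (2 * sin (θ / 2)) ^ 2 := by
  have h : cos θ = cos (θ / 2) ^ 2 - sin (θ / 2) ^ 2 := by
    rw [← cos_two_mul', mul_div_cancel₀ _ two_ne_zero]
  nlinarith [sin_sq_add_cos_sq (θ / 2)]

theorem log_two_sub_two_mul_cos (θ : ℝ) : log (2 - 2 * cos θ) = 2 * log (2 * sin (θ / 2)) := by
  rw [two_sub_two_mul_cos, log_pow, Nat.cast_ofNat]

theorem intervalIntegrable_log_two_sub_two_mul_cos (a b : ℝ) :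
    IntervalIntegrable (fun θ => log (2 - 2 * cos θ)) volume a b :=
  (analyticOnNhd_const.sub (analyticOnNhd_const.mul analyticOnNhd_cos)).meromorphicOn
    |>.intervalIntegrable_log

theorem integral_log_two_mul_sin : ∫ φ in 0..π / 2, log (2 * sin φ) = 0 := by
  have hcongr : ∫ φ in 0..π / 2, log (2 * sin φ) = ∫ φ in 0..π / 2, (log 2 + log (sin φ)) := by
    refine intervalIntegral.integral_congr_ae (Filter.Eventually.of_forall fun φ hφ => ?_)
    rw [uIoc_of_le (by positivity)] at hφ
    have : 0 < sin φ := sin_pos_of_pos_of_lt_pi hφ.1 (by linarith [hφ.2, pi_pos])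
    rw [log_mul two_ne_zero this.ne']
  have hlogsin : IntervalIntegrable (fun φ => log (sin φ)) volume 0 (π / 2) :=
    intervalIntegrable_log_sin
  rw [hcongr, intervalIntegral.integral_add intervalIntegrable_const hlogsin,
    integral_log_sin_zero_pi_div_two, intervalIntegral.integral_const, smul_eq_mul]
  ring

theorem integral_log_two_sub_two_mul_cos : ∫ θ in 0..π, log (2 - 2 * cos θ) = 0 := by
  simp_rw [log_two_sub_two_mul_cos]
  rw [intervalIntegral.integral_const_mul,
    intervalIntegral.integral_comp_div (fun φ => log (2 * sin φ)) two_ne_zero,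
    zero_div, integral_log_two_mul_sin]
  simp

theorem integral_cos_mul_log_two_sub_two_mul_cos :
    ∫ θ in 0..π, cos θ * log (2 - 2 * cos θ) = -π := by
  let F : ℝ → ℝ := fun θ => sin θ * log (2 - 2 * cos θ) - θ - sin θ
  have hcont : Continuous F := by
    -- continuity at `θ = 0` comes from that of `u ↦ u * log u`
    have hF : (fun θ => sin θ * log (2 - 2 * cos θ)) =
        fun θ => 2 * cos (θ / 2) * ((2 * sin (θ / 2)) * log (2 * sin (θ / 2))) := by
      ext θ
      rw [log_two_sub_two_mul_cos]
      nth_rw 1 [← mul_div_cancel₀ θ two_ne_zero]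
      rw [sin_two_mul]
      ring
    refine ((hF ▸ ?_ : Continuous fun θ => sin θ * log (2 - 2 * cos θ)).sub continuous_id).sub
      continuous_sin
    fun_prop
  have hderiv : ∀ θ ∈ Ioo 0 π, HasDerivAt F (cos θ * log (2 - 2 * cos θ)) θ := by
    rintro θ ⟨h0, hπ⟩
    have hsin : 0 < sin θ := sin_pos_of_pos_of_lt_pi h0 hπ
    have hcos : cos θ < 1 := by
      simpa using strictAntiOn_cos ⟨le_rfl, pi_pos.le⟩ ⟨h0.le, hπ.le⟩ h0
    have hlog : HasDerivAt (fun θ => log (2 - 2 * cos θ)) (2 * sin θ / (2 - 2 * cos θ)) θ := by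
      simpa using (((hasDerivAt_cos θ).const_mul 2).const_sub 2).log (by linarith)
    refine ((((hasDerivAt_sin θ).mul hlog).sub (hasDerivAt_id' θ)).sub
      (hasDerivAt_sin θ)).congr_deriv ?_
    have : 1 - cos θ ≠ 0 := by linarith
    field_simp
    linear_combination sin_sq_add_cos_sq θ
  have hint : IntervalIntegrable (fun θ => cos θ * log (2 - 2 * cos θ)) volume 0 π :=
    (intervalIntegrable_log_two_sub_two_mul_cos 0 π).continuousOn_mul continuous_cos.continuousOn
  rw [intervalIntegral.integral_eq_sub_of_hasDerivAt_of_le pi_pos.le hcont.continuousOn hderiv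
    hint]
  simp [F]

noncomputable def mpDensity (y : ℝ) : ℝ := √((4 - y) * y) / (2 * π * y)

theorem mpDensity_nonneg {y : ℝ} (hy : 0 ≤ y) : 0 ≤ mpDensity y := by
  unfold mpDensity
  positivity

theorem mpDensity_eq_div_sqrt {y : ℝ} (hy : y ∈ Ioo 0 4) :
    mpDensity y = (4 - y) / (2 * π * √(y * (4 - y))) := by
  have hs : 0 < √(y * (4 - y)) := sqrt_pos.2 (mul_pos hy.1 (sub_pos.2 hy.2))
  have hss : √(y * (4 - y)) ^ 2 = y * (4 - y) := sq_sqrt (mul_pos hy.1 (sub_pos.2 hy.2)).le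
  rw [mpDensity, mul_comm (4 - y), div_eq_div_iff (by positivity [hy.1]) (by positivity)]
  linear_combination 2 * π * hss

theorem measurable_mpDensity : Measurable mpDensity := by
  unfold mpDensity
  fun_prop

theorem hasDerivAt_arcsin_half_sub_one {y : ℝ} (hy : y ∈ Ioo 0 4) :
    HasDerivAt (fun y => arcsin (y / 2 - 1)) (√(y * (4 - y)))⁻¹ y := by
  have h1 : y / 2 - 1 ≠ -1 := by linarith [hy.1]
  have h2 : y / 2 - 1 ≠ 1 := by linarith [hy.2]
  refine ((hasDerivAt_arcsin h1 h2).comp y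
    (((hasDerivAt_id' y).div_const 2).sub_const 1)).congr_deriv ?_
  rw [show 1 - (y / 2 - 1) ^ 2 = y * (4 - y) / 2 ^ 2 by ring,
    sqrt_div' _ (by norm_num), sqrt_sq two_pos.le]
  have : 0 < √(y * (4 - y)) := sqrt_pos.2 (mul_pos hy.1 (sub_pos.2 hy.2))
  field_simp

theorem hasDerivAt_arcsin_moebius {t y : ℝ} (ht : 4 < t) (hy : y ∈ Ioo 0 4) :
    HasDerivAt (fun y => arcsin (((t - 2) * y - 2 * t) / (2 * (t - y))))
      (√(t * (t - 4)) / ((t - y) * √(y * (4 - y)))) y := by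
  obtain ⟨hy0, hy4⟩ := hy
  have hty : 0 < t - y := by linarith
  set w := ((t - 2) * y - 2 * t) / (2 * (t - y))
  have hw : HasDerivAt (fun y => ((t - 2) * y - 2 * t) / (2 * (t - y)))
      (t * (t - 4) / (2 * (t - y) ^ 2)) y := by
    refine ((((hasDerivAt_id' y).const_mul (t - 2)).sub_const (2 * t)).div
      (((hasDerivAt_id' y).const_sub t).const_mul 2) (by positivity)).congr_deriv ?_
    field_simp
    ring
  have hsqrt : √(1 - w ^ 2) = √(t * (t - 4)) * √(y * (4 - y)) / (2 * (t - y)) := by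
    rw [show 1 - w ^ 2 = t * (t - 4) * (y * (4 - y)) / (2 * (t - y)) ^ 2 by
        simp only [w]; field_simp; ring,
      sqrt_div' _ (by positivity), sqrt_mul (by nlinarith), sqrt_sq (by positivity)]
  have hpos : 0 < √(1 - w ^ 2) := by
    rw [hsqrt]
    have : 0 < t * (t - 4) := by nlinarith
    have : 0 < y * (4 - y) := by nlinarith
    positivity
  have hw1 : w ≠ 1 := by rintro h; simp [h] at hpos
  have hw2 : w ≠ -1 := by rintro h; simp [h] at hpos
  refine ((hasDerivAt_arcsin hw2 hw1).comp y hw).congr_deriv ?_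
  rw [hsqrt]
  have : 0 < √(y * (4 - y)) := sqrt_pos.2 (by nlinarith)
  have : 0 < √(t * (t - 4)) := sqrt_pos.2 (by nlinarith)
  have hTT : √(t * (t - 4)) ^ 2 = t * (t - 4) := sq_sqrt (by nlinarith)
  field_simp
  linear_combination -hTT

theorem two_mul_sin_mul_mpDensity_two_add_two_mul_cos {θ : ℝ} (hθ : θ ∈ Ioo 0 π) :
    2 * sin θ * mpDensity (2 + 2 * cos θ) = (1 - cos θ) / π := by
  have hsin : 0 < sin θ := sin_pos_of_pos_of_lt_pi hθ.1 hθ.2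
  have hcos : -1 < cos θ := by
    simpa using strictAntiOn_cos ⟨hθ.1.le, hθ.2.le⟩ ⟨pi_pos.le, le_rfl⟩ hθ.2
  have hsqrt : √((4 - (2 + 2 * cos θ)) * (2 + 2 * cos θ)) = 2 * sin θ := by
    rw [show (4 - (2 + 2 * cos θ)) * (2 + 2 * cos θ) = (2 * sin θ) ^ 2 by
      linear_combination -4 * sin_sq_add_cos_sq θ, sqrt_sq (by positivity)]
  have : 1 + cos θ ≠ 0 := by linarith
  rw [mpDensity, hsqrt]
  field_simp
  linear_combination sin_sq_add_cos_sq θ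

theorem two_mul_sin_mul_log_four_sub_mul_mpDensity {θ : ℝ} (hθ : θ ∈ Ioo 0 π) :
    2 * sin θ * (log (4 - (2 + 2 * cos θ)) * mpDensity (2 + 2 * cos θ)) =
      (log (2 - 2 * cos θ) - cos θ * log (2 - 2 * cos θ)) / π := by
  rw [mul_left_comm, two_mul_sin_mul_mpDensity_two_add_two_mul_cos hθ]
  ring_nf

theorem integrableOn_log_four_sub_mul_mpDensity :
    IntegrableOn (fun y => log (4 - y) * mpDensity y) (Ioo 0 4) := by
  rw [show Ioo (0 : ℝ) 4 = Ioo (2 - 2) (2 + 2) by norm_num,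
    integrableOn_Ioo_iff_integrableOn_sin_mul_comp_cos two_pos,
    integrableOn_congr_fun (fun θ hθ => two_mul_sin_mul_log_four_sub_mul_mpDensity hθ)
      measurableSet_Ioo,
    ← integrableOn_Ioc_iff_integrableOn_Ioo,
    ← intervalIntegrable_iff_integrableOn_Ioc_of_le pi_pos.le]
  have h := intervalIntegrable_log_two_sub_two_mul_cos 0 π
  exact (h.sub (h.continuousOn_mul continuous_cos.continuousOn)).div_const π

theorem integral_log_four_sub_mul_mpDensity :
    ∫ y in Ioo 0 4, log (4 - y) * mpDensity y = 1 := by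
  rw [show Ioo (0 : ℝ) 4 = Ioo (2 - 2) (2 + 2) by norm_num,
    integral_Ioo_eq_integral_sin_mul_comp_cos two_pos,
    setIntegral_congr_fun measurableSet_Ioo
      (fun θ hθ => two_mul_sin_mul_log_four_sub_mul_mpDensity hθ),
    ← integral_Ioc_eq_integral_Ioo, ← intervalIntegral.integral_of_le pi_pos.le,
    intervalIntegral.integral_div, intervalIntegral.integral_sub
      (intervalIntegrable_log_two_sub_two_mul_cos 0 π)
      ((intervalIntegrable_log_two_sub_two_mul_cos 0 π).continuousOn_mul
        continuous_cos.continuousOn),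
    integral_log_two_sub_two_mul_cos, integral_cos_mul_log_two_sub_two_mul_cos, zero_sub, neg_neg,
    div_self pi_ne_zero]

section Stieltjes

variable {t : ℝ}

/- Since `(t - y)⁻¹ * mpDensity y = (1 + (4 - t) / (t - y)) / (2 * π * √(y * (4 - y)))`, a
primitive is a combination of `arcsin (y / 2 - 1)` and the arcsine of the Möbius map sending
`0, 4, t` to `-1, 1, ∞`. -/
noncomputable def stieltjesPrimitive (t y : ℝ) : ℝ :=
  (arcsin (y / 2 - 1) - √(t * (t - 4)) / t * arcsin (((t - 2) * y - 2 * t) / (2 * (t - y)))) /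
    (2 * π)

theorem continuousOn_stieltjesPrimitive (ht : 4 < t) :
    ContinuousOn (stieltjesPrimitive t) (Icc 0 4) := by
  have : ∀ y ∈ Icc (0 : ℝ) 4, 2 * (t - y) ≠ 0 := fun y hy => by linarith [hy.2]
  unfold stieltjesPrimitive
  fun_prop (disch := assumption)

theorem hasDerivAt_stieltjesPrimitive (ht : 4 < t) {y : ℝ} (hy : y ∈ Ioo 0 4) :
    HasDerivAt (stieltjesPrimitive t) ((t - y)⁻¹ * mpDensity y) y := by
  refine ((((hasDerivAt_arcsin_half_sub_one hy).sub
    ((hasDerivAt_arcsin_moebius ht hy).const_mul _)).div_const (2 * π))).congr_deriv ?_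
  have hs : 0 < √(y * (4 - y)) := sqrt_pos.2 (mul_pos hy.1 (sub_pos.2 hy.2))
  have hTT : √(t * (t - 4)) ^ 2 = t * (t - 4) := sq_sqrt (by nlinarith)
  have : t - y ≠ 0 := by linarith [hy.2]
  have : t ≠ 0 := by linarith
  rw [mpDensity_eq_div_sqrt hy]
  field_simp
  linear_combination -hTT

theorem integrableOn_inv_sub_mul_mpDensity (ht : 4 < t) :
    IntegrableOn (fun y => (t - y)⁻¹ * mpDensity y) (Ioo 0 4) :=
  (intervalIntegral.integrableOn_deriv_of_nonneg (continuousOn_stieltjesPrimitive ht)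
    (fun y hy => hasDerivAt_stieltjesPrimitive ht hy)
    (fun y hy => mul_nonneg (inv_nonneg.2 (by linarith [hy.2])) (mpDensity_nonneg hy.1.le)))
    |>.mono_set Ioo_subset_Ioc_self

theorem integral_inv_sub_mul_mpDensity (ht : 4 < t) :
    ∫ y in Ioo 0 4, (t - y)⁻¹ * mpDensity y = 1 / 2 - √((t - 4) / (4 * t)) := by
  rw [← integral_Ioc_eq_integral_Ioo, ← intervalIntegral.integral_of_le zero_le_four,
    intervalIntegral.integral_eq_sub_of_hasDerivAt_of_le zero_le_four
      (continuousOn_stieltjesPrimitive ht) (fun y hy => hasDerivAt_stieltjesPrimitive ht hy)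
      ((intervalIntegrable_iff_integrableOn_Ioo_of_le zero_le_four).2
        (integrableOn_inv_sub_mul_mpDensity ht))]
  have : t - 4 ≠ 0 := by linarith
  have : t ≠ 0 := by linarith
  have hw4 : ((t - 2) * 4 - 2 * t) / (2 * (t - 4)) = 1 := by field_simp; ring
  have hw0 : ((t - 2) * 0 - 2 * t) / (2 * (t - 0)) = -1 := by field_simp; ring
  have hsqrt : √((t - 4) / (4 * t)) = √(t * (t - 4)) / (2 * t) := by
    rw [show (t - 4) / (4 * t) = t * (t - 4) / (2 * t) ^ 2 by field_simp; ring,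
      sqrt_div' _ (by positivity), sqrt_sq (by linarith)]
  simp only [stieltjesPrimitive, hw4, hw0, hsqrt, show (4 : ℝ) / 2 - 1 = 1 by norm_num,
    show (0 : ℝ) / 2 - 1 = -1 by norm_num, arcsin_one, arcsin_neg_one]
  field_simp
  ring

end Stieltjes

section Fubini

variable {x : ℝ}

theorem integral_inv_sub {y : ℝ} (hy : y < 4) (hx : 4 ≤ x) :
    ∫ t in 4..x, (t - y)⁻¹ = log (x - y) - log (4 - y) := by
  rw [intervalIntegral.integral_comp_sub_right (fun t => t⁻¹),
    integral_inv_of_pos (by linarith) (by linarith), log_div (by linarith) (by linarith)]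

theorem integral_inv_sub_mul_eq_setIntegral (hx : 4 ≤ x) (y : ℝ) :
    (∫ t in 4..x, (t - y)⁻¹) * mpDensity y = ∫ t in Ioc 4 x, (t - y)⁻¹ * mpDensity y := by
  rw [intervalIntegral.integral_of_le hx, integral_mul_const]

theorem continuousOn_sqrt_sub_four_div (x : ℝ) :
    ContinuousOn (fun t : ℝ => √((t - 4) / (4 * t))) (Icc 4 x) := by
  have : ∀ t ∈ Icc (4 : ℝ) x, 4 * t ≠ 0 := fun t ht => by linarith [ht.1]
  fun_prop (disch := assumption)

theorem integrable_inv_sub_mul_mpDensity_prod (x : ℝ) :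
    Integrable (Function.uncurry fun y t => (t - y)⁻¹ * mpDensity y)
      ((volume.restrict (Ioo 0 4)).prod (volume.restrict (Ioc 4 x))) := by
  have hmeas : Measurable (Function.uncurry fun y t => (t - y)⁻¹ * mpDensity y) :=
    (measurable_snd.sub measurable_fst).inv.mul (measurable_mpDensity.comp measurable_fst)
  refine (integrable_prod_iff' hmeas.aestronglyMeasurable).2 ⟨?_, ?_⟩
  · refine (ae_restrict_iff' measurableSet_Ioc).2 (Filter.Eventually.of_forall fun t ht => ?_)
    exact integrableOn_inv_sub_mul_mpDensity ht.1
  · have hG : IntegrableOn (fun t => 1 / 2 - √((t - 4) / (4 * t))) (Ioc 4 x) :=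
      ((continuousOn_const.sub (continuousOn_sqrt_sub_four_div x)).integrableOn_Icc).mono_set
        Ioc_subset_Icc_self
    refine hG.congr_fun (fun t ht => (integral_inv_sub_mul_mpDensity ht.1).symm.trans
      (setIntegral_congr_fun measurableSet_Ioo fun y hy => ?_)) measurableSet_Ioc
    rw [Function.uncurry_apply_pair, norm_of_nonneg (mul_nonneg
      (inv_nonneg.2 (by linarith [hy.2, ht.1])) (mpDensity_nonneg hy.1.le))]

theorem integrableOn_integral_inv_sub_mul_mpDensity (hx : 4 ≤ x) :
    IntegrableOn (fun y => (∫ t in 4..x, (t - y)⁻¹) * mpDensity y) (Ioo 0 4) := by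
  simp only [integral_inv_sub_mul_eq_setIntegral hx]
  exact (integrable_inv_sub_mul_mpDensity_prod x).integral_prod_left

theorem integral_integral_inv_sub_mul_mpDensity (hx : 4 ≤ x) :
    ∫ y in Ioo 0 4, (∫ t in 4..x, (t - y)⁻¹) * mpDensity y =
      ∫ t in 4..x, (1 / 2 - √((t - 4) / (4 * t))) := by
  simp only [integral_inv_sub_mul_eq_setIntegral hx]
  rw [integral_integral_swap (integrable_inv_sub_mul_mpDensity_prod x),
    intervalIntegral.integral_of_le hx]
  exact setIntegral_congr_fun measurableSet_Ioc fun t ht => integral_inv_sub_mul_mpDensity ht.1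

end Fubini

end MarchenkoPastur

open MarchenkoPastur

/-- For `x ≥ 4`,
`φ(μ_MP, x) = ∫₀⁴ log|x-y| dμ_MP(y) - x/2 = -I_MP(x) - 1`, where `μ_MP` has
density `√((4-y)y)/(2πy)` on `[0,4]` and `I_MP(x) = ∫₄ˣ √((t-4)/(4t)) dt`. -/
theorem mp_log_potential (x : ℝ) (hx : 4 ≤ x) :
    (∫ y in (0:ℝ)..4, Real.log |x - y| * (Real.sqrt ((4 - y) * y) / (2 * Real.pi * y))) - x / 2
      = -(∫ t in (4:ℝ)..x, Real.sqrt ((t - 4) / (4 * t))) - 1 := by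
  have hsplit : ∀ y ∈ Ioo (0 : ℝ) 4, log |x - y| * mpDensity y =
      log (4 - y) * mpDensity y + (∫ t in 4..x, (t - y)⁻¹) * mpDensity y := fun y hy => by
    rw [log_abs, integral_inv_sub hy.2 hx]
    ring
  change (∫ y in (0 : ℝ)..4, log |x - y| * mpDensity y) - x / 2 = _
  rw [intervalIntegral.integral_of_le zero_le_four, integral_Ioc_eq_integral_Ioo,
    setIntegral_congr_fun measurableSet_Ioo hsplit,
    integral_add integrableOn_log_four_sub_mul_mpDensity
      (integrableOn_integral_inv_sub_mul_mpDensity hx),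
    integral_log_four_sub_mul_mpDensity, integral_integral_inv_sub_mul_mpDensity hx,
    intervalIntegral.integral_sub intervalIntegrable_const
      ((continuousOn_sqrt_sub_four_div x).intervalIntegrable_of_Icc hx),
    intervalIntegral.integral_const, smul_eq_mul]
  ring
end

section
/- The function z ↦ φ(μ_MP, z) = ∫₀⁴ log|z-y| dμ_MP(y) - z/2 is strictly decreasing on [4,∞). -/
/-!
The argument works for the interval `[0, c]` with any `c > 0` in place of `[0, 4]`.
Writing `w(y) = ((c - y) y)^{-1/2}`, the density `√((c - y) y) / (2π y)` equals `(c - y) w(y) / (2π)`,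
and `∫₀ᶜ w = π` (an antiderivative is `arcsin (2y/c - 1)`). Hence the potential minus `z/2` is
`(2π)⁻¹ ∫₀ᶜ w(y) ((c - y) log|z - y| - z) dy`, and for each `y < c` the bracket is strictly
decreasing in `z ≥ c`, since its `z`-derivative is `(c - z)/(z - y)`.
-/

open Real Set MeasureTheory

section ArcsineWeight

variable {c : ℝ}

lemma hasDerivAt_arcsin_two_mul_div_sub_one {y : ℝ} (hy : y ∈ Ioo 0 c) :
    HasDerivAt (fun x => arcsin (2 * x / c - 1)) (√((c - y) * y))⁻¹ y := by
  obtain ⟨hy0, hyc⟩ := hy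
  have hc : 0 < c := hy0.trans hyc
  have hq : 0 < √((c - y) * y) := sqrt_pos.2 (mul_pos (sub_pos.2 hyc) hy0)
  have hinner : HasDerivAt (fun x => 2 * x / c - 1) (2 / c) y := by
    simpa using ((hasDerivAt_id y).const_mul 2).div_const c |>.sub_const 1
  have hne : 2 * y / c - 1 ≠ -1 ∧ 2 * y / c - 1 ≠ 1 := by
    constructor <;> intro h <;> field_simp at h <;> linarith
  refine ((hasDerivAt_arcsin hne.1 hne.2).comp y hinner).congr_deriv ?_
  rw [show 1 - (2 * y / c - 1) ^ 2 = (2 / c) ^ 2 * ((c - y) * y) by field_simp; ring,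
    sqrt_mul (by positivity), sqrt_sq (by positivity)]
  field_simp

lemma continuous_arcsin_two_mul_div_sub_one : Continuous fun x => arcsin (2 * x / c - 1) := by
  fun_prop

lemma intervalIntegrable_inv_sqrt_sub_mul_self (hc : 0 < c) :
    IntervalIntegrable (fun y => (√((c - y) * y))⁻¹) volume 0 c := by
  rw [intervalIntegrable_iff_integrableOn_Ioc_of_le hc.le]
  exact intervalIntegral.integrableOn_deriv_of_nonneg
    continuous_arcsin_two_mul_div_sub_one.continuousOn
    (fun _ hy => hasDerivAt_arcsin_two_mul_div_sub_one hy) (fun _ _ => by positivity)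

lemma integral_inv_sqrt_sub_mul_self (hc : 0 < c) :
    ∫ y in (0)..c, (√((c - y) * y))⁻¹ = π := by
  rw [intervalIntegral.integral_eq_sub_of_hasDerivAt_of_le hc.le
    continuous_arcsin_two_mul_div_sub_one.continuousOn
    (fun _ hy => hasDerivAt_arcsin_two_mul_div_sub_one hy)
    (intervalIntegrable_inv_sqrt_sub_mul_self hc)]
  norm_num [hc.ne']

end ArcsineWeight

lemma sqrt_mul_div_right_eq_mul_inv_sqrt (u y : ℝ) : √(u * y) / y = u * (√(u * y))⁻¹ := by
  rcases le_or_gt (u * y) 0 with h | h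
  · simp [sqrt_eq_zero'.2 h]
  · have hy : y ≠ 0 := by rintro rfl; simp at h
    have hs : 0 < √(u * y) := sqrt_pos.2 h
    field_simp
    rw [sq_sqrt h.le]

section LogKernel

variable {c z : ℝ}

lemma continuousOn_sub_mul_log_abs_sub (hz : c ≤ z) :
    ContinuousOn (fun y => (c - y) * log |z - y|) (Iic c) := by
  rcases hz.eq_or_lt with rfl | hz
  · simp_rw [log_abs]
    exact (continuous_mul_log.comp (continuous_sub_left c)).continuousOn
  · refine (continuous_sub_left c).continuousOn.mul (ContinuousOn.log (by fun_prop) ?_)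
    intro y hy
    simp [sub_eq_zero, (lt_of_le_of_lt hy hz).ne']

lemma strictAntiOn_sub_mul_log_abs_sub_sub {y : ℝ} (hy : y < c) :
    StrictAntiOn (fun z => (c - y) * log |z - y| - z) (Ici c) := by
  intro a ha b hb hab
  have hay : 0 < a - y := by linarith [mem_Ici.1 ha]
  have hby : 0 < b - y := by linarith
  have hlog : log (b - y) - log (a - y) < (b - a) / (a - y) := by
    rw [← log_div hby.ne' hay.ne']
    calc log ((b - y) / (a - y)) < (b - y) / (a - y) - 1 :=
          log_lt_sub_one_of_pos (by positivity) (by rw [ne_eq, div_eq_one_iff_eq hay.ne']; linarith)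
      _ = (b - a) / (a - y) := by field_simp; ring
  have hfrac : (c - y) * ((b - a) / (a - y)) ≤ b - a := by
    rw [mul_div_assoc', div_le_iff₀ hay]
    nlinarith [mem_Ici.1 ha]
  simp only [abs_of_pos hay, abs_of_pos hby]
  linarith [mul_lt_mul_of_pos_left hlog (sub_pos.2 hy), mul_sub (c - y) (log (b - y)) (log (a - y))]

lemma intervalIntegrable_inv_sqrt_mul_log_kernel (hc : 0 < c) (hz : c ≤ z) :
    IntervalIntegrable
      (fun y => (√((c - y) * y))⁻¹ * (((c - y) * log |z - y| - z) / (2 * π))) volume 0 c :=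
  (intervalIntegrable_inv_sqrt_sub_mul_self hc).mul_continuousOn <|
    (((continuousOn_sub_mul_log_abs_sub hz).sub continuousOn_const).div_const _).mono <| by
      simp [uIcc_of_le hc.le, Icc_subset_Iic_self]

lemma integral_log_abs_sub_mul_density_sub_half (hc : 0 < c) (hz : c ≤ z) :
    (∫ y in (0)..c, log |z - y| * (√((c - y) * y) / (2 * π * y))) - z / 2
      = ∫ y in (0)..c, (√((c - y) * y))⁻¹ * (((c - y) * log |z - y| - z) / (2 * π)) := by
  have hdensity : ∀ y, log |z - y| * (√((c - y) * y) / (2 * π * y))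
      = (√((c - y) * y))⁻¹ * (((c - y) * log |z - y| - z) / (2 * π))
        + (√((c - y) * y))⁻¹ * (z / (2 * π)) := by
    intro y
    rw [mul_comm (2 * π), ← div_div, sqrt_mul_div_right_eq_mul_inv_sqrt]
    ring
  simp_rw [hdensity]
  rw [intervalIntegral.integral_add (intervalIntegrable_inv_sqrt_mul_log_kernel hc hz)
    ((intervalIntegrable_inv_sqrt_sub_mul_self hc).mul_const _),
    intervalIntegral.integral_mul_const, integral_inv_sqrt_sub_mul_self hc,
    show π * (z / (2 * π)) = z / 2 by field_simp, add_sub_cancel_right]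

theorem strictAntiOn_integral_log_abs_sub_mul_density_sub_half (hc : 0 < c) :
    StrictAntiOn
      (fun z => (∫ y in (0)..c, log |z - y| * (√((c - y) * y) / (2 * π * y))) - z / 2)
      (Ici c) := by
  intro a ha b hb hab
  have hlt : ∀ y ∈ Ioo 0 c,
      (√((c - y) * y))⁻¹ * (((c - y) * log |b - y| - b) / (2 * π))
        < (√((c - y) * y))⁻¹ * (((c - y) * log |a - y| - a) / (2 * π)) := by
    rintro y ⟨hy0, hyc⟩
    exact mul_lt_mul_of_pos_left ((div_lt_div_iff_of_pos_right (by positivity)).2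
      (strictAntiOn_sub_mul_log_abs_sub_sub hyc ha hb hab)) (by positivity)
  simp only [integral_log_abs_sub_mul_density_sub_half hc (mem_Ici.1 ha),
    integral_log_abs_sub_mul_density_sub_half hc (mem_Ici.1 hb)]
  refine intervalIntegral.integral_lt_integral_of_ae_le_of_measure_setOfPred_lt_ne_zero hc.le
    (intervalIntegrable_inv_sqrt_mul_log_kernel hc hb)
    (intervalIntegrable_inv_sqrt_mul_log_kernel hc ha) ?_ ?_
  · filter_upwards [ae_restrict_mem measurableSet_Ioc] with y ⟨hy0, hyc⟩
    rcases hyc.lt_or_eq with hyc | rfl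
    · exact (hlt y ⟨hy0, hyc⟩).le
    · simp
  · rw [Measure.restrict_apply' measurableSet_Ioc]
    refine (lt_of_lt_of_le (b := volume (Ioo 0 c)) (by simp [hc]) (measure_mono ?_)).ne'
    exact fun y hy => ⟨hlt y hy, Ioo_subset_Ioc_self hy⟩

end LogKernel

/-- The function
`z ↦ φ(μ_MP, z) = ∫₀⁴ log|z-y| dμ_MP(y) - z/2` is strictly decreasing on `[4,∞)`,
where `μ_MP` is the Marchenko–Pastur measure with density `√((4-y)y)/(2πy)` on `[0,4]`. -/
theorem mp_log_potential_strictAnti :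
    StrictAntiOn
      (fun z : ℝ =>
        (∫ y in (0:ℝ)..4, Real.log |z - y| * (Real.sqrt ((4 - y) * y) / (2 * Real.pi * y)))
          - z / 2)
      (Set.Ici 4) :=
  strictAntiOn_integral_log_abs_sub_mul_density_sub_half four_pos
end
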